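/- arXiv:2401.15452 — 4 statements merged into one kernel-verified Lean document; each statement's English description precedes it below -/
import Mathlib

section
/- Minimizing the linear proxy ∑_{r∈R}∑_{s∈S} p_r y_{r,s} exp(−κ d_{r,s}) over assignments satisfying the single-assignment constraint yields the same set of minimizers as minimizing the Kolm-Pollak EDE K(y) = −(1/κ)·ln((1/T)·∑_{r∈R} p_r exp(−κ ∑_s y_{r,s} d_{r,s})), when κ < 0, p_r > 0, and T = ∑_r p_r > 0. -/
/-! On a feasible assignment every row `y r` is a unit vector, so `exp (-κ * ∑ s, y r s * d r s)`
equals `∑ s, y r s * exp (-κ * d r s)`; hence the sum inside the logarithm of `K` is exactly `Kbar`.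
Since `κ < 0` and `T > 0`, the map `t ↦ -(1/κ) * log (t / T)` is strictly increasing on `t > 0`,
so `K` and `Kbar` order feasible assignments in the same way. -/
open Real Finset

lemma exists_eq_pi_single_of_zero_one_of_sum_eq_one {S : Type*} [Fintype S] [DecidableEq S]
    {y : S → ℝ} (h01 : ∀ s, y s = 0 ∨ y s = 1) (hsum : ∑ s, y s = 1) :
    ∃ s₀, y = Pi.single s₀ 1 := by
  obtain ⟨s₀, hs₀⟩ : ∃ s₀, y s₀ ≠ 0 := by
    by_contra! h
    simp [h] at hsum
  have hy₀ : y s₀ = 1 := (h01 s₀).resolve_left hs₀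
  have hrest : ∑ s ∈ univ.erase s₀, y s = 0 := by
    linarith [add_sum_erase univ y (mem_univ s₀)]
  have hnonneg : ∀ s ∈ univ.erase s₀, 0 ≤ y s := fun s _ => by
    rcases h01 s with h | h <;> simp [h]
  refine ⟨s₀, funext fun s => ?_⟩
  rcases eq_or_ne s s₀ with rfl | hs
  · simp [hy₀]
  · simpa [hs] using (sum_eq_zero_iff_of_nonneg hnonneg).mp hrest s (by simp [hs])

lemma apply_sum_mul_eq_sum_mul_apply_of_zero_one {S : Type*} [Fintype S]
    {y : S → ℝ} (h01 : ∀ s, y s = 0 ∨ y s = 1) (hsum : ∑ s, y s = 1)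
    (g : ℝ → ℝ) (d : S → ℝ) :
    g (∑ s, y s * d s) = ∑ s, y s * g (d s) := by
  classical
  obtain ⟨s₀, rfl⟩ := exists_eq_pi_single_of_zero_one_of_sum_eq_one h01 hsum
  simp [Pi.single_apply]

lemma sep_forall_le_eq_of_strictMonoOn {α β γ : Type*} [LinearOrder β] [Preorder γ]
    {F : Set α} {f : α → β} {g : α → γ} {φ : β → γ} {s : Set β}
    (hφ : StrictMonoOn φ s) (hf : ∀ y ∈ F, f y ∈ s) (hg : ∀ y ∈ F, g y = φ (f y)) :
    {y ∈ F | ∀ y' ∈ F, f y ≤ f y'} = {y ∈ F | ∀ y' ∈ F, g y ≤ g y'} := by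
  ext y
  refine and_congr_right fun hy => forall₂_congr fun y' hy' => ?_
  rw [hg y hy, hg y' hy', hφ.le_iff_le (hf y hy) (hf y' hy')]

lemma strictMonoOn_neg_inv_mul_log_mul {κ c : ℝ} (hκ : κ < 0) (hc : 0 < c) :
    StrictMonoOn (fun t => -(1/κ) * Real.log (c * t)) (Set.Ioi 0) := by
  intro a ha b _ hab
  have hκ' : 0 < -(1/κ) := by simpa using hκ
  exact mul_lt_mul_of_pos_left (Real.log_lt_log (mul_pos hc ha) (by gcongr)) hκ'

theorem stmt_1 {R S : Type*} [Fintype R] [Fintype S] [Nonempty R]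
    (p : R → ℝ) (hp : ∀ r, 0 < p r) (κ : ℝ) (hκ : κ < 0) (d : R → S → ℝ)
    (T : ℝ) (hT : T = ∑ r, p r)
    (F : Set (R → S → ℝ))
    (hF : F = {y | (∀ r s, y r s = 0 ∨ y r s = 1) ∧ ∀ r, ∑ s, y r s = 1})
    (K Kbar : (R → S → ℝ) → ℝ)
    (hK : ∀ y, K y =
      -(1/κ) * Real.log ((1/T) * ∑ r, p r * Real.exp (-κ * ∑ s, y r s * d r s)))
    (hKbar : ∀ y, Kbar y = ∑ r, ∑ s, p r * y r s * Real.exp (-κ * d r s)) :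
    {y ∈ F | ∀ y' ∈ F, Kbar y ≤ Kbar y'} = {y ∈ F | ∀ y' ∈ F, K y ≤ K y'} := by
  have hKbar_eq : ∀ y ∈ F, Kbar y = ∑ r, p r * Real.exp (-κ * ∑ s, y r s * d r s) := by
    intro y hy
    obtain ⟨h01, hsum⟩ := hF ▸ hy
    simp only [hKbar, mul_assoc, ← mul_sum]
    congr! 2 with r
    exact (apply_sum_mul_eq_sum_mul_apply_of_zero_one (h01 r) (hsum r)
      (fun x => Real.exp (-κ * x)) (d r)).symm
  have hT_pos : 0 < T := hT ▸ sum_pos (fun r _ => hp r) univ_nonempty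
  refine sep_forall_le_eq_of_strictMonoOn
    (strictMonoOn_neg_inv_mul_log_mul hκ (one_div_pos.mpr hT_pos)) (fun y hy => ?_)
    (fun y hy => by rw [hK, hKbar_eq y hy])
  rw [Set.mem_Ioi, hKbar_eq y hy]
  exact sum_pos (fun r _ => mul_pos (hp r) (Real.exp_pos _)) univ_nonempty
end

section
/- For κ < 0 and σ* > 0, if Δ > 0 then 0 < Δ·(1 − exp(κσ*)) < Ê(Δ, σ*) < Δ, where Ê(Δ, σ*) = −(1/κ)·ln(exp(κσ*) + exp(−κΔ)·(1 − exp(κσ*))). -/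
/-!
Write `p = exp(κσ) ∈ (0, 1)` and `t = -κΔ > 0`, so that `Ê = log (p + (1 - p) eᵗ) / t · Δ`.
Strict convexity of `exp` on the segment `[0, t]` gives `exp ((1 - p) t) < p + (1 - p) eᵗ`,
which is the lower bound; the upper bound is `p + (1 - p) eᵗ < eᵗ`, since `eᵗ > 1`.
-/

open Real

lemma mul_lt_log_add_exp_mul {p t : ℝ} (hp0 : 0 < p) (hp1 : p < 1) (ht : t ≠ 0) :
    (1 - p) * t < log (p + exp t * (1 - p)) := by
  have hconvex := strictConvexOn_exp.2 (Set.mem_univ 0) (Set.mem_univ t) (Ne.symm ht)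
    hp0 (sub_pos.2 hp1) (by ring)
  simp only [smul_eq_mul, mul_zero, zero_add, exp_zero, mul_one] at hconvex
  calc (1 - p) * t = log (exp ((1 - p) * t)) := (log_exp _).symm
    _ < log (p + exp t * (1 - p)) := by
      refine log_lt_log (exp_pos _) ?_
      linarith [mul_comm (1 - p) (exp t)]

lemma log_add_exp_mul_lt {p t : ℝ} (hp0 : 0 < p) (hp1 : p ≤ 1) (ht : 0 < t) :
    log (p + exp t * (1 - p)) < t := by
  have hexp : 1 < exp t := one_lt_exp_iff.2 ht
  calc log (p + exp t * (1 - p)) < log (exp t) :=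
        log_lt_log (by nlinarith) (by nlinarith)
    _ = t := log_exp t

theorem stmt_4 (κ σ Δ : ℝ) (hκ : κ < 0) (hσ : 0 < σ) (hΔ : 0 < Δ) :
    0 < Δ * (1 - Real.exp (κ * σ)) ∧
    Δ * (1 - Real.exp (κ * σ)) <
      -(1/κ) * Real.log (Real.exp (κ * σ) + Real.exp (-κ * Δ) * (1 - Real.exp (κ * σ))) ∧
    -(1/κ) * Real.log (Real.exp (κ * σ) + Real.exp (-κ * Δ) * (1 - Real.exp (κ * σ))) < Δ := by
  set p := exp (κ * σ)
  set L := log (p + exp (-κ * Δ) * (1 - p))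
  have hp0 : 0 < p := exp_pos _
  have hp1 : p < 1 := exp_lt_one_iff.2 (mul_neg_of_neg_of_pos hκ hσ)
  have hnegκ : 0 < -κ := neg_pos.2 hκ
  have ht : 0 < -κ * Δ := mul_pos hnegκ hΔ
  have hlower : (1 - p) * (-κ * Δ) < L := mul_lt_log_add_exp_mul hp0 hp1 ht.ne'
  have hupper : L < -κ * Δ := log_add_exp_mul_lt hp0 hp1.le ht
  have hÊ : -(1 / κ) * L = L / -κ := by field_simp
  refine ⟨mul_pos hΔ (sub_pos.2 hp1), ?_, ?_⟩
  · rw [hÊ, lt_div_iff₀ hnegκ]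
    linarith
  · rw [hÊ, div_lt_iff₀ hnegκ]
    linarith
end

section
/- For κ < 0 and σ* > 0, if Δ < 0 then −min{|Δ|·(1 − exp(κσ*)), σ*} < Ê(Δ, σ*) < 0, i.e., |Ê(Δ,σ*)| < min{|Δ|·(1 − exp(κσ*)), σ*}, where Ê(Δ, σ*) = −(1/κ)·ln(exp(κσ*) + exp(−κΔ)·(1 − exp(κσ*))). -/
theorem stmt_5 (κ σ Δ : ℝ) (hκ : κ < 0) (hσ : 0 < σ) (hΔ : Δ < 0)
    (E : ℝ) (hE : E = -(1/κ) * Real.log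
      (Real.exp (κ * σ) + Real.exp (-κ * Δ) * (1 - Real.exp (κ * σ)))) :
    -min (|Δ| * (1 - Real.exp (κ * σ))) σ < E ∧ E < 0 ∧
    |E| < min (|Δ| * (1 - Real.exp (κ * σ))) σ := by
  have hκ' : 0 < -κ := by linarith
  set a := Real.exp (κ * σ) with ha
  have ha0 : 0 < a := Real.exp_pos _
  have ha1 : a < 1 := by
    rw [ha]; exact Real.exp_lt_one_iff.mpr (mul_neg_of_neg_of_pos hκ hσ)
  set e := Real.exp (-κ * Δ) with he
  have he0 : 0 < e := Real.exp_pos _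
  have he1 : e < 1 := by
    rw [he]; exact Real.exp_lt_one_iff.mpr (mul_neg_of_pos_of_neg hκ' hΔ)
  set X := a + e * (1 - a) with hX
  have hX0 : 0 < X := by nlinarith
  have hX1 : X < 1 := by nlinarith
  have hlog0 : Real.log X < 0 := Real.log_neg hX0 hX1
  have hXa : a < X := by nlinarith
  have hlog1 : κ * σ < Real.log X := by
    have := Real.log_lt_log ha0 hXa
    rwa [ha, Real.log_exp] at this
  -- strict concavity of log
  have hne : (1 : ℝ) ≠ Real.exp (-κ * Δ) := by
    rw [← he]; intro h; rw [← h] at he1; exact lt_irrefl 1 he1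
  have hlog2 : (1 - a) * (-κ * Δ) < Real.log X := by
    have h := strictConcaveOn_log_Ioi.2 (Set.mem_Ioi.mpr one_pos)
      (Set.mem_Ioi.mpr (Real.exp_pos (-κ * Δ))) hne ha0 (sub_pos.mpr ha1) (by ring)
    simp only [smul_eq_mul, mul_one, Real.log_one, mul_zero, zero_add, Real.log_exp] at h
    rw [← he] at h
    rw [show a + (1 - a) * e = X from by rw [hX]; ring] at h
    exact h
  have hEeq : E = Real.log X / (-κ) := by
    rw [hE]; field_simp
  have hE0 : E < 0 := by
    rw [hEeq]; exact div_neg_of_neg_of_pos hlog0 hκ'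
  have hEσ : -σ < E := by
    rw [hEeq, lt_div_iff₀ hκ']; nlinarith
  have hEΔ : -(|Δ| * (1 - a)) < E := by
    rw [abs_of_neg hΔ, hEeq, lt_div_iff₀ hκ']; nlinarith
  have habs : |E| < min (|Δ| * (1 - a)) σ := by
    rw [abs_of_neg hE0, lt_min_iff]
    constructor <;> linarith
  exact ⟨(abs_lt.mp habs).1, hE0, habs⟩
end

section
/- For κ < 0 and σ* > 0, the function Δ ↦ Ê(Δ, σ*) = −(1/κ)·ln(exp(κσ*) + exp(−κΔ)·(1 − exp(κσ*))) is convex on ℝ, i.e., its second derivative with respect to Δ is positive everywhere. -/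
/-! With `u = -κ > 0`, `a = exp (κσ) ∈ (0, 1)` and `c = 1 - a > 0`, the function is
`Δ ↦ log (a + c·exp (uΔ)) / u`. Its derivative is the logistic-type function
`c·exp (uΔ) / (a + c·exp (uΔ))`, whose derivative `u·a·c·exp (uΔ) / (a + c·exp (uΔ))²`
is positive. -/

open Real Set

section LogAddMulExp

variable {a c u x : ℝ}

theorem hasDerivAt_log_add_mul_exp_div (hu : u ≠ 0) (hx : a + c * exp (u * x) ≠ 0) :
    HasDerivAt (fun y => log (a + c * exp (u * y)) / u)
      (c * exp (u * x) / (a + c * exp (u * x))) x := by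
  have hinner : HasDerivAt (fun y => a + c * exp (u * y)) (c * (exp (u * x) * u)) x :=
    (((hasDerivAt_id x).const_mul u).exp.const_mul c).const_add a |>.congr_deriv (by simp)
  exact (hinner.log hx).div_const u |>.congr_deriv (by field_simp)

theorem hasDerivAt_mul_exp_div_add_mul_exp (hx : a + c * exp (u * x) ≠ 0) :
    HasDerivAt (fun y => c * exp (u * y) / (a + c * exp (u * y)))
      (u * a * (c * exp (u * x)) / (a + c * exp (u * x)) ^ 2) x := by
  have hnum : HasDerivAt (fun y => c * exp (u * y)) (c * (exp (u * x) * u)) x :=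
    ((hasDerivAt_id x).const_mul u).exp.const_mul c |>.congr_deriv (by simp)
  exact hnum.div (hnum.const_add a) hx |>.congr_deriv (by ring)

theorem add_mul_exp_pos (ha : 0 ≤ a) (hc : 0 < c) (y : ℝ) : 0 < a + c * exp (u * y) := by
  positivity

theorem deriv_log_add_mul_exp_div (ha : 0 ≤ a) (hc : 0 < c) (hu : u ≠ 0) :
    deriv (fun y => log (a + c * exp (u * y)) / u) =
      fun y => c * exp (u * y) / (a + c * exp (u * y)) :=
  funext fun y => (hasDerivAt_log_add_mul_exp_div hu (add_mul_exp_pos ha hc y).ne').deriv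

theorem deriv_deriv_log_add_mul_exp_div (ha : 0 ≤ a) (hc : 0 < c) (hu : u ≠ 0) (y : ℝ) :
    deriv (deriv fun y => log (a + c * exp (u * y)) / u) y =
      u * a * (c * exp (u * y)) / (a + c * exp (u * y)) ^ 2 := by
  rw [deriv_log_add_mul_exp_div ha hc hu]
  exact (hasDerivAt_mul_exp_div_add_mul_exp (add_mul_exp_pos ha hc y).ne').deriv

theorem convexOn_log_add_mul_exp_div (ha : 0 ≤ a) (hc : 0 < c) (hu : 0 < u) :
    ConvexOn ℝ univ fun y => log (a + c * exp (u * y)) / u := by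
  refine convexOn_univ_of_deriv2_nonneg (fun y => ?_) ?_ fun y => ?_
  · exact (hasDerivAt_log_add_mul_exp_div hu.ne' (add_mul_exp_pos ha hc y).ne').differentiableAt
  · rw [deriv_log_add_mul_exp_div ha hc hu.ne']
    exact fun y =>
      (hasDerivAt_mul_exp_div_add_mul_exp (add_mul_exp_pos ha hc y).ne').differentiableAt
  · rw [Function.iterate_succ_apply, Function.iterate_one,
      deriv_deriv_log_add_mul_exp_div ha hc hu.ne']
    positivity

end LogAddMulExp

theorem stmt_6 (κ σ : ℝ) (hκ : κ < 0) (hσ : 0 < σ)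
    (E : ℝ → ℝ)
    (hE : ∀ Δ, E Δ =
      -(1/κ) * Real.log (Real.exp (κ * σ) + Real.exp (-κ * Δ) * (1 - Real.exp (κ * σ)))) :
    ConvexOn ℝ Set.univ E ∧ ∀ Δ : ℝ, 0 < deriv (deriv E) Δ := by
  set a := exp (κ * σ)
  have ha : 0 < a := exp_pos _
  have hc : 0 < 1 - a := sub_pos.mpr (Real.exp_lt_one_iff.mpr (mul_neg_of_neg_of_pos hκ hσ))
  have hu : 0 < -κ := neg_pos.mpr hκ
  have hE' : E = fun Δ => log (a + (1 - a) * exp (-κ * Δ)) / -κ := by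
    ext Δ
    rw [hE, mul_comm (exp _)]
    ring
  subst hE'
  refine ⟨convexOn_log_add_mul_exp_div ha.le hc hu, fun Δ => ?_⟩
  rw [deriv_deriv_log_add_mul_exp_div ha.le hc hu.ne']
  positivity
end
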